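/- arXiv:1301.2804 — 3 statements merged into one kernel-verified Lean document; each statement's English description precedes it below -/
import Mathlib

section
/- Let R be a ring with identity, let {a_{0,n}}, {a_{1,n}} be sequences in R, and let {r_n} be a sequence of units satisfying r_{n+1} = a_{0,n} + a_{1,n} r_n^{-1} for n ≥ 1. If {x_n} satisfies x_{n+1} = a_{0,n}x_n + a_{1,n}x_{n-1} and there is m ≥ 1 with a_{1,m} = 0, then x_n = r_n r_{n-1} ··· r_{m+1} x_m for all n ≥ m+1. -/
/-!
Put `t n = x n - r n * x (n - 1)` (`eigenResidual`). Because `r` is an eigensequence, the second-order recurrence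
factors as `t (n + 1) = -(a₁ n * (r n)⁻¹) * t n` together with `x (n + 1) = r (n + 1) * x n + t (n + 1)`.
A vanishing coefficient `a₁ m` kills `t (m + 1)`, hence every later `t n`, so from `m` on the
solution is propagated by multiplication with `r` alone.
-/

section Products

variable {M : Type*} [Monoid M]

theorem List.prod_map_range_sub_succ (c : ℕ → M) {m n : ℕ} (h : m ≤ n) :
    ((List.range (n + 1 - m)).map fun i => c (n + 1 - i)).prod =
      c (n + 1) * ((List.range (n - m)).map fun i => c (n - i)).prod := by
  rw [Nat.sub_add_comm h, List.prod_range_succ']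
  simp only [Nat.sub_zero, Nat.succ_eq_add_one, Nat.add_sub_add_right]

theorem eq_prod_map_range_mul_of_succ_eq_mul (c x : ℕ → M) {m : ℕ}
    (hx : ∀ n ≥ m, x (n + 1) = c (n + 1) * x n) :
    ∀ n ≥ m, x n = ((List.range (n - m)).map fun i => c (n - i)).prod * x m := by
  intro n hn
  induction n, hn using Nat.le_induction with
  | base => simp
  | succ n hn ih =>
    rw [hx n hn, ih, List.prod_map_range_sub_succ c hn, mul_assoc]

end Products

section SemiconjugateFactorization

variable {R : Type*} [Ring R]

def eigenResidual (r : ℕ → Rˣ) (x : ℕ → R) (n : ℕ) : R :=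
  x n - r n * x (n - 1)

theorem eigenResidual_succ (a₀ a₁ : ℕ → R) (r : ℕ → Rˣ) (x : ℕ → R) {n : ℕ}
    (hr : (r (n + 1) : R) = a₀ n + a₁ n * (((r n)⁻¹ : Rˣ) : R))
    (hx : x (n + 1) = a₀ n * x n + a₁ n * x (n - 1)) :
    eigenResidual r x (n + 1) = -(a₁ n * (((r n)⁻¹ : Rˣ) : R)) * eigenResidual r x n := by
  have hinv : (((r n)⁻¹ : Rˣ) : R) * (r n * x (n - 1)) = x (n - 1) := by
    rw [← mul_assoc, Units.inv_mul, one_mul]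
  simp only [eigenResidual, Nat.add_sub_cancel, hr, hx, mul_sub, neg_mul, mul_assoc, hinv]
  noncomm_ring

theorem eigenResidual_eq_zero_of_coeff_eq_zero (a₀ a₁ : ℕ → R) (r : ℕ → Rˣ) (x : ℕ → R)
    (hr : ∀ n ≥ 1, (r (n + 1) : R) = a₀ n + a₁ n * (((r n)⁻¹ : Rˣ) : R))
    (hx : ∀ n ≥ 1, x (n + 1) = a₀ n * x n + a₁ n * x (n - 1))
    {m : ℕ} (hm : 1 ≤ m) (ha : a₁ m = 0) :
    ∀ n ≥ m + 1, eigenResidual r x n = 0 := by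
  intro n hn
  induction n, hn using Nat.le_induction with
  | base => rw [eigenResidual_succ a₀ a₁ r x (hr m hm) (hx m hm), ha]; simp
  | succ n hn ih => rw [eigenResidual_succ a₀ a₁ r x (hr n (by omega)) (hx n (by omega)), ih, mul_zero]

end SemiconjugateFactorization

/-- If a coefficient `a₁ m` vanishes then from index `m+1` on, every solution is given by
products of the eigensequence terms. -/
theorem second_order_vanishing_coefficient {R : Type*} [Ring R]
    (a₀ a₁ : ℕ → R) (r : ℕ → Rˣ) (x : ℕ → R)
    (hr : ∀ n ≥ 1, (r (n + 1) : R) = a₀ n + a₁ n * (((r n)⁻¹ : Rˣ) : R))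
    (hx : ∀ n ≥ 1, x (n + 1) = a₀ n * x n + a₁ n * x (n - 1))
    (m : ℕ) (hm : 1 ≤ m) (ha : a₁ m = 0) :
    ∀ n ≥ m + 1, x n = ((List.range (n - m)).map (fun i => (r (n - i) : R))).prod * x m := by
  have hstep : ∀ n ≥ m, x (n + 1) = (r (n + 1) : R) * x n := fun n hn =>
    sub_eq_zero.mp (eigenResidual_eq_zero_of_coeff_eq_zero a₀ a₁ r x hr hx hm ha (n + 1) (by omega))
  exact fun n hn => eq_prod_map_range_mul_of_succ_eq_mul (fun k => (r k : R)) x hstep n (by omega)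
end

section
/- Let R be a commutative ring with identity, let {a_n}, {b_n} be periodic sequences in R, and define sequences α_n, β_n by α_{n+1} = a_n α_n + b_n α_{n-1}, β_{n+1} = a_n β_n + b_n β_{n-1} with α_0 = 0, α_1 = 1, β_0 = 1, β_1 = 0. If r_1 ∈ R is a root of α_p r² + (β_p − α_{p+1}) r − β_{p+1} = 0, r_1 is a unit, and the recurrence r_{j+1} = a_j + b_j r_j^{-1} produces units r_2, ..., r_p, then extending {r_n} periodically with period p gives a sequence satisfying r_{n+1} r_n = a_n r_n + b_n for all n ≥ 1, where a_n, b_n have common period p. -/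
/-!
Put `x n = α n * r₁ + β n`: it solves the recurrence with `x 0 = 1` and `x 1 = r₁`, and the Riccati
recursion for `r` says exactly that `x j = r j * x (j - 1)` for `1 ≤ j ≤ p`, so `x 0, …, x p` are
units. The quadratic equation for `r₁` is `r₁ * x p = x (p + 1)`; expanding `x (p + 1)` by the
recurrence and cancelling the unit `x (p - 1)` gives the missing relation `r₁ * r p = a p * r p + b p`,
which closes the period. Periodicity then carries the relations from `1 ≤ n ≤ p` to all `n ≥ 1`.
-/

section Recurrence

variable {R : Type*} [CommRing R]

def IsSecondOrderSolution (a b x : ℕ → R) : Prop :=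
  ∀ n ≥ 1, x (n + 1) = a n * x n + b n * x (n - 1)

variable {a b x y : ℕ → R}

theorem IsSecondOrderSolution.add (hx : IsSecondOrderSolution a b x)
    (hy : IsSecondOrderSolution a b y) :
    IsSecondOrderSolution a b (x + y) := by
  intro n hn
  simp only [Pi.add_apply, hx n hn, hy n hn]
  ring

theorem IsSecondOrderSolution.mul_const (hx : IsSecondOrderSolution a b x) (c : R) :
    IsSecondOrderSolution a b (fun n => x n * c) := by
  intro n hn
  simp only [hx n hn]
  ring

theorem IsSecondOrderSolution.eq_mul_of_riccati (hx : IsSecondOrderSolution a b x)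
    {p : ℕ} {r : ℕ → Rˣ} (hx1 : x 1 = r 1 * x 0)
    (hrec : ∀ j, 1 ≤ j → j + 1 ≤ p → (r (j + 1) : R) = a j + b j * (((r j)⁻¹ : Rˣ) : R)) :
    ∀ j, 1 ≤ j → j ≤ p → x j = r j * x (j - 1) := by
  intro j hj
  induction j, hj using Nat.le_induction with
  | base => exact fun _ => hx1
  | succ j hj ih =>
    intro hjp
    have hinv : (((r j)⁻¹ : Rˣ) : R) * r j = 1 := Units.inv_mul _
    rw [hx j hj, Nat.add_sub_cancel, ih (by omega), hrec j hj hjp]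
    linear_combination (-(b j * x (j - 1))) * hinv

end Recurrence

theorem isUnit_of_eq_mul_prev {M : Type*} [Monoid M] {x : ℕ → M} {r : ℕ → Mˣ} {p : ℕ}
    (hx0 : IsUnit (x 0)) (hx : ∀ j, 1 ≤ j → j ≤ p → x j = r j * x (j - 1)) :
    ∀ j ≤ p, IsUnit (x j) := by
  intro j
  induction j with
  | zero => exact fun _ => hx0
  | succ j ih =>
    intro hjp
    rw [hx (j + 1) (by omega) hjp, Nat.add_sub_cancel]
    exact (r (j + 1)).isUnit.mul (ih (by omega))

theorem Nat.forall_ge_one_of_Icc_of_add {P : ℕ → Prop} {p : ℕ} (hp : 0 < p)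
    (hbase : ∀ n, 1 ≤ n → n ≤ p → P n) (hstep : ∀ n ≥ 1, P n → P (n + p)) :
    ∀ n ≥ 1, P n := by
  intro n
  induction n using Nat.strong_induction_on with
  | _ n ih =>
    intro hn
    by_cases hnp : n ≤ p
    · exact hbase n hn hnp
    · obtain ⟨m, rfl⟩ : ∃ m, n = m + p := ⟨n - p, by omega⟩
      exact hstep m (by omega) (ih m (by omega) (by omega))

/-- Periodic coefficients: a root of the quadratic built from the fundamental solutions
yields a periodic eigensequence of period p. -/
theorem periodic_eigensequence {R : Type*} [CommRing R]
    (a b : ℕ → R) (p : ℕ) (hp : 0 < p)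
    (ha : ∀ n, a (n + p) = a n) (hb : ∀ n, b (n + p) = b n)
    (α β : ℕ → R) (hα0 : α 0 = 0) (hα1 : α 1 = 1) (hβ0 : β 0 = 1) (hβ1 : β 1 = 0)
    (hα : ∀ n ≥ 1, α (n + 1) = a n * α n + b n * α (n - 1))
    (hβ : ∀ n ≥ 1, β (n + 1) = a n * β n + b n * β (n - 1))
    (r : ℕ → Rˣ)
    (hroot : α p * (r 1 : R) ^ 2 + (β p - α (p + 1)) * (r 1 : R) - β (p + 1) = 0)
    (hrec : ∀ j, 1 ≤ j → j + 1 ≤ p → (r (j + 1) : R) = a j + b j * (((r j)⁻¹ : Rˣ) : R))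
    (s : ℕ → R) (hs : ∀ j, 1 ≤ j → j ≤ p → s j = (r j : R))
    (hsper : ∀ n ≥ 1, s (n + p) = s n) :
    ∀ n ≥ 1, s (n + 1) * s n = a n * s n + b n := by
  set x : ℕ → R := fun n => α n * r 1 + β n
  have hx : IsSecondOrderSolution a b x :=
    IsSecondOrderSolution.add (IsSecondOrderSolution.mul_const hα _) hβ
  have hfactor := hx.eq_mul_of_riccati (by simp [x, hα0, hα1, hβ0, hβ1]) hrec
  have hunit := isUnit_of_eq_mul_prev (by simp [x, hα0, hβ0]) hfactor (p - 1) (by omega)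
  have hwrap : (r 1 : R) * r p = a p * r p + b p := by
    refine hunit.mul_right_cancel ?_
    have hcross : (r 1 : R) * x p = x (p + 1) := by linear_combination hroot
    rw [hx p hp, hfactor p hp le_rfl] at hcross
    linear_combination hcross
  refine Nat.forall_ge_one_of_Icc_of_add hp (fun n hn hnp => ?_) (fun n hn h => ?_)
  · rw [hs n hn hnp]
    rcases hnp.lt_or_eq with hlt | rfl
    · have hinv : (((r n)⁻¹ : Rˣ) : R) * r n = 1 := Units.inv_mul _
      rw [hs (n + 1) (by omega) hlt, hrec n hn hlt]
      linear_combination b n * hinv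
    · rw [add_comm, hsper 1 le_rfl, hs 1 le_rfl hp, hwrap]
  · rw [add_right_comm, hsper (n + 1) (by omega), hsper n hn, ha, hb, h]
end

section
/- Define a real sequence by r_{3j+1} = 3j+1, r_{3j+2} = −(3j+2)/(3j+1), r_{3j+3} = −1/(3j+2) for j ≥ 0. Then r_{n+1} r_n = a_n r_n − 1 for all n ≥ 1, where a_n = 2cos(2πn/3), i.e. a_{3j+1} = a_{3j+2} = −1, a_{3j+3} = 2. Hence {r_n} is an eigensequence of x_{n+1} = 2cos(2πn/3)x_n − x_{n-1}. -/
open Real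

lemma cos_two_pi_div_three : cos (2 * π / 3) = -(1 / 2) := by
  rw [show 2 * π / 3 = π - π / 3 by ring, cos_pi_sub, cos_pi_div_three]

lemma cos_two_pi_mul_three_mul_add_div_three (j : ℕ) (x : ℝ) :
    cos (2 * π * (3 * j + x) / 3) = cos (2 * π * x / 3) := by
  rw [show 2 * π * (3 * j + x) / 3 = 2 * π * x / 3 + j * (2 * π) by ring,
    cos_add_nat_mul_two_pi]

lemma two_mul_cos_two_pi_mul_div_three (j : ℕ) :
    2 * cos (2 * π * ↑(3 * j + 1) / 3) = -1 ∧
      2 * cos (2 * π * ↑(3 * j + 2) / 3) = -1 ∧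
      2 * cos (2 * π * ↑(3 * j + 3) / 3) = 2 := by
  push_cast
  simp only [cos_two_pi_mul_three_mul_add_div_three]
  refine ⟨?_, ?_, ?_⟩
  · rw [mul_one, cos_two_pi_div_three]; norm_num
  · rw [show 2 * π * 2 / 3 = -(2 * π / 3) + 2 * π by ring, cos_add_two_pi, cos_neg,
      cos_two_pi_div_three]
    norm_num
  · rw [show 2 * π * 3 / 3 = 2 * π by ring, cos_two_pi]; norm_num

lemma Nat.exists_eq_three_mul_add_of_one_le {n : ℕ} (hn : 1 ≤ n) :
    ∃ j, n = 3 * j + 1 ∨ n = 3 * j + 2 ∨ n = 3 * j + 3 := by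
  refine ⟨(n - 1) / 3, ?_⟩
  omega

/-- A nonperiodic eigensequence for `x_{n+1} = 2cos(2πn/3) x_n − x_{n-1}`. -/
theorem nonperiodic_eigensequence (r a : ℕ → ℝ)
    (hr1 : ∀ j : ℕ, r (3 * j + 1) = 3 * j + 1)
    (hr2 : ∀ j : ℕ, r (3 * j + 2) = -((3 * j + 2) / (3 * j + 1)))
    (hr3 : ∀ j : ℕ, r (3 * j + 3) = -(1 / (3 * j + 2)))
    (hacos : ∀ n : ℕ, a n = 2 * Real.cos (2 * Real.pi * n / 3)) :
    (∀ j : ℕ, a (3 * j + 1) = -1 ∧ a (3 * j + 2) = -1 ∧ a (3 * j + 3) = 2) ∧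
      ∀ n ≥ 1, r (n + 1) * r n = a n * r n - 1 := by
  have ha : ∀ j : ℕ, a (3 * j + 1) = -1 ∧ a (3 * j + 2) = -1 ∧ a (3 * j + 3) = 2 := by
    simpa only [hacos] using two_mul_cos_two_pi_mul_div_three
  refine ⟨ha, fun n hn => ?_⟩
  have hj1 (j : ℕ) : (3 * j + 1 : ℝ) ≠ 0 := by positivity
  have hj2 (j : ℕ) : (3 * j + 2 : ℝ) ≠ 0 := by positivity
  obtain ⟨j, rfl | rfl | rfl⟩ := Nat.exists_eq_three_mul_add_of_one_le hn
  · rw [hr2, hr1, (ha j).1]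
    field_simp [hj1 j]
    ring
  · rw [hr3, hr2, (ha j).2.1]
    field_simp [hj1 j, hj2 j]
    ring
  · rw [show 3 * j + 3 + 1 = 3 * (j + 1) + 1 by ring, hr1, hr3, (ha j).2.2]
    push_cast
    field_simp [hj2 j]
    ring
end
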